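/- arXiv:1604.02684 — 2 statements merged into one kernel-verified Lean document; each statement's English description precedes it below -/
import Mathlib

section
/- Let g be a surjective endomorphism of a compact Kähler manifold (X, ω) of dimension n, and let V ⊆ H^{1,1}(X, ℝ) be a g*-invariant linear subspace containing the class of a Kähler current. Then the first dynamical degree d₁(g) (the spectral radius of g* on H^{1,1}(X,ℝ)) equals the spectral radius of g* restricted to V. -/
/-!
A closed salient cone `P` in a finite-dimensional space is *normal*: there is `c > 0` with
`c ‖a‖ ≤ ‖a + b‖` for `a, b ∈ P` (compactness of `P ∩ sphere 0 1`). If a closed ball around `B`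
lies in `P` and `T` preserves `P`, then `T (B ± y) ∈ P` add up to `2 T B`, so normality bounds
`‖T‖` by a constant times `‖T B‖`. For `T = g^m` and `B ∈ V` this gives
`‖g^m‖ ≤ C ‖(g|_V)^m‖`, while `‖(g|_V)^m‖ ≤ ‖g^m‖` trivially; both inequalities survive
taking `m`-th roots and `limsup`, because `C^(1/m) → 1`.
-/

/-- The spectral radius of a linear endomorphism of a finite-dimensional normed real
vector space, via Gelfand's formula. -/
noncomputable def gelfandRadius {E : Type*} [NormedAddCommGroup E] [NormedSpace ℝ E]
    [FiniteDimensional ℝ E] (T : E →ₗ[ℝ] E) : ℝ :=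
  Filter.limsup (fun m : ℕ => ‖LinearMap.toContinuousLinearMap (T ^ m)‖ ^ ((1 : ℝ) / m))
    Filter.atTop

open Filter Metric Set Topology

theorem limsup_rpow_one_div_le_of_le_mul {a b : ℕ → ℝ} {C : ℝ} (hC : 0 < C)
    (ha : ∀ m, 0 ≤ a m) (hab : ∀ m, a m ≤ C * b m)
    (hb : IsBoundedUnder (· ≤ ·) atTop fun m => b m ^ ((1 : ℝ) / m)) :
    limsup (fun m => a m ^ ((1 : ℝ) / m)) atTop ≤
      limsup (fun m => b m ^ ((1 : ℝ) / m)) atTop := by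
  have hb₀ (m : ℕ) : 0 ≤ b m := nonneg_of_mul_nonneg_right ((ha m).trans (hab m)) hC
  set u : ℕ → ℝ := fun m => C ^ ((1 : ℝ) / m)
  set v : ℕ → ℝ := fun m => b m ^ ((1 : ℝ) / m)
  have hu : Tendsto u atTop (𝓝 1) := by
    simpa [u] using tendsto_const_nhds.rpow tendsto_one_div_atTop_nhds_zero_nat (Or.inl hC.ne')
  have hu₀ : ∃ᶠ m in atTop, 0 ≤ u m := Frequently.of_forall fun m => by positivity
  have hv₀ : 0 ≤ᶠ[atTop] v := Eventually.of_forall fun m => Real.rpow_nonneg (hb₀ m) _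
  have hle (m : ℕ) : a m ^ ((1 : ℝ) / m) ≤ u m * v m := by
    rw [← Real.mul_rpow hC.le (hb₀ m)]
    exact Real.rpow_le_rpow (ha m) (hab m) (by positivity)
  calc limsup (fun m => a m ^ ((1 : ℝ) / m)) atTop
      ≤ limsup (u * v) atTop :=
        limsup_le_limsup (Eventually.of_forall hle)
          (isCoboundedUnder_le_of_le atTop fun m => Real.rpow_nonneg (ha m) _)
          (isBoundedUnder_le_mul_of_nonneg hu₀ hu.isBoundedUnder_le hv₀ hb)
    _ ≤ limsup u atTop * limsup v atTop := limsup_mul_le hu₀ hu.isBoundedUnder_le hv₀ hb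
    _ = limsup v atTop := by rw [hu.limsup_eq, one_mul]

section GelfandRadius

variable {E F : Type*} [NormedAddCommGroup E] [NormedSpace ℝ E] [FiniteDimensional ℝ E]
  [NormedAddCommGroup F] [NormedSpace ℝ F] [FiniteDimensional ℝ F]

theorem norm_toContinuousLinearMap_pow_rpow_le (T : E →ₗ[ℝ] E) (m : ℕ) :
    ‖LinearMap.toContinuousLinearMap (T ^ m)‖ ^ ((1 : ℝ) / m) ≤
      max ‖LinearMap.toContinuousLinearMap T‖ 1 := by
  rcases Nat.eq_zero_or_pos m with rfl | hm
  · simp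
  have hpow : ‖LinearMap.toContinuousLinearMap (T ^ m)‖ ≤
      max ‖LinearMap.toContinuousLinearMap T‖ 1 ^ m :=
    calc ‖LinearMap.toContinuousLinearMap (T ^ m)‖
        = ‖LinearMap.toContinuousLinearMap T ^ m‖ :=
          congrArg norm (map_pow (Module.End.toContinuousLinearMap E) T m)
      _ ≤ ‖LinearMap.toContinuousLinearMap T‖ ^ m := norm_pow_le' _ hm
      _ ≤ max ‖LinearMap.toContinuousLinearMap T‖ 1 ^ m := by gcongr; exact le_max_left _ _
  calc ‖LinearMap.toContinuousLinearMap (T ^ m)‖ ^ ((1 : ℝ) / m)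
      ≤ (max ‖LinearMap.toContinuousLinearMap T‖ 1 ^ m) ^ ((m : ℝ)⁻¹) := by
        rw [one_div]
        exact Real.rpow_le_rpow (norm_nonneg _) hpow (by positivity)
    _ = max ‖LinearMap.toContinuousLinearMap T‖ 1 :=
        Real.pow_rpow_inv_natCast (by positivity) hm.ne'

theorem gelfandRadius_le_of_le_mul (S : E →ₗ[ℝ] E) (T : F →ₗ[ℝ] F) {C : ℝ} (hC : 0 ≤ C)
    (h : ∀ m : ℕ, ‖LinearMap.toContinuousLinearMap (S ^ m)‖ ≤
      C * ‖LinearMap.toContinuousLinearMap (T ^ m)‖) :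
    gelfandRadius S ≤ gelfandRadius T :=
  limsup_rpow_one_div_le_of_le_mul (C := C + 1) (by positivity) (fun _ => norm_nonneg _)
    (fun m => (h m).trans (by gcongr; linarith))
    (isBoundedUnder_of ⟨_, norm_toContinuousLinearMap_pow_rpow_le T⟩)

theorem norm_toContinuousLinearMap_restrict_le (T : E →ₗ[ℝ] E) {V : Submodule ℝ E}
    (hV : ∀ v ∈ V, T v ∈ V) :
    ‖LinearMap.toContinuousLinearMap (T.restrict hV)‖ ≤ ‖LinearMap.toContinuousLinearMap T‖ :=
  ContinuousLinearMap.opNorm_le_bound _ (norm_nonneg _) fun x =>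
    (LinearMap.toContinuousLinearMap T).le_opNorm (x : E)

theorem gelfandRadius_restrict_le (T : E →ₗ[ℝ] E) {V : Submodule ℝ E}
    (hV : ∀ v ∈ V, T v ∈ V) : gelfandRadius (T.restrict hV) ≤ gelfandRadius T :=
  gelfandRadius_le_of_le_mul _ _ zero_le_one fun m => by
    rw [Module.End.pow_restrict m hV, one_mul]
    exact norm_toContinuousLinearMap_restrict_le _ _

end GelfandRadius

section SalientCone

variable {E : Type*} [NormedAddCommGroup E] [NormedSpace ℝ E] [FiniteDimensional ℝ E]
  {P : Set E}

theorem exists_pos_mul_norm_le_norm_add_of_salient (hPclosed : IsClosed P)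
    (hPsmul : ∀ t : ℝ, 0 ≤ t → ∀ a ∈ P, t • a ∈ P)
    (hPsalient : ∀ a, a ∈ P → -a ∈ P → a = 0) :
    ∃ c > 0, ∀ a ∈ P, ∀ b ∈ P, c * ‖a‖ ≤ ‖a + b‖ := by
  have hdist_pos : ∀ a ∈ P ∩ sphere 0 1, 0 < infDist a (-P) := by
    rintro a ⟨haP, ha⟩
    have ha₀ : a ≠ 0 := ne_zero_of_mem_unit_sphere ⟨a, ha⟩
    refine (hPclosed.neg.notMem_iff_infDist_pos ⟨-a, by simpa using haP⟩).1 fun ha' => ?_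
    exact ha₀ (hPsalient a haP ha')
  obtain ⟨c, hc, hcP⟩ := ((isCompact_sphere 0 1).inter_left hPclosed).exists_forall_le'
    (continuous_infDist_pt _).continuousOn hdist_pos
  refine ⟨c, hc, fun a haP b hbP => ?_⟩
  rcases eq_or_ne a 0 with rfl | ha₀
  · simp
  have hna : 0 < ‖a‖ := norm_pos_iff.2 ha₀
  have hunit : ‖a‖⁻¹ • a ∈ P ∩ sphere 0 1 :=
    ⟨hPsmul _ (by positivity) a haP, by simp [norm_smul, hna.ne']⟩
  have hneg : -(‖a‖⁻¹ • b) ∈ -P := by simpa using hPsmul _ (by positivity) b hbP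
  have : c ≤ ‖a‖⁻¹ * ‖a + b‖ :=
    calc c ≤ infDist (‖a‖⁻¹ • a) (-P) := hcP _ hunit
      _ ≤ dist (‖a‖⁻¹ • a) (-(‖a‖⁻¹ • b)) := infDist_le_dist_of_mem hneg
      _ = ‖a‖⁻¹ * ‖a + b‖ := by
        rw [dist_eq_norm, sub_neg_eq_add, ← smul_add, norm_smul, norm_inv, norm_norm]
  rwa [inv_mul_eq_div, le_div_iff₀ hna] at this

theorem exists_opNorm_le_mul_norm_apply_of_mem_interior (hPclosed : IsClosed P)
    (hPsmul : ∀ t : ℝ, 0 ≤ t → ∀ a ∈ P, t • a ∈ P)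
    (hPsalient : ∀ a, a ∈ P → -a ∈ P → a = 0) {B : E} (hB : B ∈ interior P) :
    ∃ K ≥ 0, ∀ T : E →L[ℝ] E, MapsTo T P P → ‖T‖ ≤ K * ‖T B‖ := by
  obtain ⟨c, hc, hcP⟩ := exists_pos_mul_norm_le_norm_add_of_salient hPclosed hPsmul hPsalient
  obtain ⟨ε, hε, hball⟩ := nhds_basis_closedBall.mem_iff.1 (mem_interior_iff_mem_nhds.1 hB)
  refine ⟨(2 / c + 1) / ε, by positivity, fun T hT => ?_⟩
  refine T.opNorm_le_bound (by positivity) fun x => ?_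
  rcases eq_or_ne x 0 with rfl | hx₀
  · simp
  set y : E := (ε / ‖x‖) • x
  have hy : ‖y‖ = ε := by simp [y, norm_smul, abs_of_pos hε, hx₀]
  have hBy : T (B + y) ∈ P := hT (hball (by simp [hy]))
  have hBy' : T (B - y) ∈ P := hT (hball (by simp [hy]))
  have hnormal : c * ‖T (B + y)‖ ≤ 2 * ‖T B‖ := by
    have := hcP _ hBy _ hBy'
    rwa [← map_add, add_add_sub_cancel, ← two_smul ℝ, map_smul, norm_smul, Real.norm_two]
      at this
  have hTy : ‖T y‖ ≤ (2 / c + 1) * ‖T B‖ :=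
    calc ‖T y‖ = ‖T (B + y) - T B‖ := by rw [map_add, add_sub_cancel_left]
      _ ≤ ‖T (B + y)‖ + ‖T B‖ := norm_sub_le _ _
      _ ≤ 2 / c * ‖T B‖ + ‖T B‖ := by
        gcongr
        rw [div_mul_eq_mul_div, le_div_iff₀ hc, mul_comm]
        exact hnormal
      _ = (2 / c + 1) * ‖T B‖ := by ring
  calc ‖T x‖ = ‖x‖ / ε * ‖T y‖ := by
        rw [map_smul, norm_smul, Real.norm_eq_abs, abs_of_pos (by positivity),
          ← mul_assoc, div_mul_div_cancel₀ hε.ne', div_self (norm_ne_zero_iff.2 hx₀), one_mul]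
    _ ≤ ‖x‖ / ε * ((2 / c + 1) * ‖T B‖) := by gcongr
    _ = (2 / c + 1) / ε * ‖T B‖ * ‖x‖ := by ring

end SalientCone

theorem stmt_18_general
    (H : Type*) [NormedAddCommGroup H] [NormedSpace ℝ H] [FiniteDimensional ℝ H]
    (g : H →ₗ[ℝ] H)                  -- the pullback g* on H^{1,1}(X,ℝ)
    (P : Set H)                      -- cone of classes of positive closed (1,1)-currents
    (hPclosed : IsClosed P)
    (hPsmul : ∀ t : ℝ, 0 ≤ t → ∀ a ∈ P, t • a ∈ P)
    (hPsalient : ∀ a, a ∈ P → -a ∈ P → a = 0)     -- strictly convex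
    (hPg : ∀ a ∈ P, g a ∈ P)                      -- g*-invariant
    (V : Submodule ℝ H) (hV : ∀ v ∈ V, g v ∈ V)   -- a g*-invariant subspace
    (B : H) (hBV : B ∈ V) (hB : B ∈ interior P) : -- V contains a Kähler current class
    gelfandRadius g = gelfandRadius (g.restrict hV) := by
  obtain ⟨K, hK, hKP⟩ :=
    exists_opNorm_le_mul_norm_apply_of_mem_interior hPclosed hPsmul hPsalient hB
  refine le_antisymm (gelfandRadius_le_of_le_mul _ _ (C := K * ‖B‖) (by positivity) fun m => ?_)
    (gelfandRadius_restrict_le g hV)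
  have hmaps : MapsTo (LinearMap.toContinuousLinearMap (g ^ m)) P P := by
    simpa [Module.End.coe_pow] using (show MapsTo g P P from hPg).iterate m
  have hBm : ‖(g ^ m) B‖ ≤ ‖LinearMap.toContinuousLinearMap (g.restrict hV ^ m)‖ * ‖B‖ := by
    simpa [Module.End.pow_restrict m hV] using
      (LinearMap.toContinuousLinearMap (g.restrict hV ^ m)).le_opNorm ⟨B, hBV⟩
  calc ‖LinearMap.toContinuousLinearMap (g ^ m)‖
      ≤ K * ‖(g ^ m) B‖ := hKP _ hmaps
    _ ≤ K * ‖B‖ * ‖LinearMap.toContinuousLinearMap (g.restrict hV ^ m)‖ := by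
      rw [mul_assoc, mul_comm ‖B‖]; gcongr

/-- `H` models `H^{1,1}(X,ℝ)` of a compact Kähler manifold `X`, `g` is the
pullback action `g*` of a surjective endomorphism of `X`, and `P` is the closed, strictly
convex (salient), `g*`-invariant cone of classes of positive closed `(1,1)`-currents.
If `V ⊆ H^{1,1}(X,ℝ)` is a `g*`-invariant subspace containing the class `B` of a Kähler
current (an interior point of `P`), then the first dynamical degree
`d₁(g) = ρ(g*|_{H^{1,1}})` equals the spectral radius of `g*` restricted to `V`. -/
theorem stmt_18
    (H : Type*) [NormedAddCommGroup H] [NormedSpace ℝ H] [FiniteDimensional ℝ H]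
    (g : H →ₗ[ℝ] H)                  -- the pullback g* on H^{1,1}(X,ℝ)
    (P : Set H)                      -- cone of classes of positive closed (1,1)-currents
    (hPclosed : IsClosed P)
    (hPadd : ∀ a ∈ P, ∀ b ∈ P, a + b ∈ P)
    (hPsmul : ∀ t : ℝ, 0 ≤ t → ∀ a ∈ P, t • a ∈ P)
    (hPsalient : ∀ a, a ∈ P → -a ∈ P → a = 0)     -- strictly convex
    (hPg : ∀ a ∈ P, g a ∈ P)                      -- g*-invariant
    (V : Submodule ℝ H) (hV : ∀ v ∈ V, g v ∈ V)   -- a g*-invariant subspace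
    (B : H) (hBV : B ∈ V) (hB : B ∈ interior P) : -- V contains a Kähler current class
    gelfandRadius g = gelfandRadius (g.restrict hV) :=
  stmt_18_general H g P hPclosed hPsmul hPsalient hPg V hV B hBV hB
end

section
/- Let V be a finite-dimensional real vector space, C ⊆ V a closed strictly convex cone with nonempty interior (i.e., C ∩ (−C) = {0} and C spans V), and T : V → V a linear map with T(C) ⊆ C. If B is an interior point of C and χ : V → ℝ is a linear functional that is strictly positive on C ∖ {0}, then the spectral radius of T equals lim_{m→∞} χ(Tᵐ B)^{1/m}. -/
/-!
The sequences `χ (Tᵐ B)` and `‖Tᵐ‖` agree up to constants independent of `m`. One direction is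
`χ (S B) ≤ ‖χ‖ ‖B‖ ‖S‖`. For the other, compactness of the unit sphere of the cone gives
`δ ‖v‖ ≤ χ v` on `C`, and since `B ± w ∈ C` for `‖w‖ ≤ ε`, every `S` preserving `C` satisfies
`ε δ ‖S‖ ≤ χ (S B)`. Hence both `m`-th roots have the same limit, and `‖Tᵐ‖^(1/m)` converges
by the multiplicative form of Fekete's lemma, `m ↦ ‖Tᵐ‖` being submultiplicative.
-/

open Filter Set Metric Topology

theorem tendsto_nat_div_div_atTop {m : ℕ} (hm : 0 < m) :
    Tendsto (fun n : ℕ => ((n / m : ℕ) : ℝ) / n) atTop (𝓝 (1 / m)) := by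
  have hm' : (m : ℝ) ≠ 0 := by positivity
  have hfloor : Tendsto (fun n : ℕ => (⌊(n : ℝ) / m⌋₊ : ℝ) / ((n : ℝ) / m)) atTop (𝓝 1) :=
    tendsto_nat_floor_div_atTop.comp
      (tendsto_natCast_atTop_atTop.atTop_div_const (by positivity))
  refine (hfloor.div_const (m : ℝ)).congr fun n => ?_
  rw [Nat.floor_div_eq_div, div_div, div_mul_cancel₀ _ hm']

def Submultiplicative (g : ℕ → ℝ) : Prop :=
  ∀ m n, g (m + n) ≤ g m * g n

namespace Submultiplicative

variable {g : ℕ → ℝ}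

theorem norm_pow {R : Type*} [SeminormedRing R] (a : R) :
    Submultiplicative fun n => ‖a ^ n‖ := fun m n => by
  simpa only [pow_add] using norm_mul_le (a ^ m) (a ^ n)

theorem apply_mul_add_le (h : Submultiplicative g) (hg : ∀ n, 0 ≤ g n) (m q r : ℕ) :
    g (m * q + r) ≤ g m ^ q * g r := by
  induction q with
  | zero => simp
  | succ q ih =>
    calc g (m * (q + 1) + r) = g (m + (m * q + r)) := by ring_nf
      _ ≤ g m * g (m * q + r) := h _ _
      _ ≤ g m * (g m ^ q * g r) := mul_le_mul_of_nonneg_left ih (hg m)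
      _ = g m ^ (q + 1) * g r := by ring

theorem pow_one_div_le (h : Submultiplicative g) (hg : ∀ n, 0 ≤ g n) {m : ℕ} {G : ℝ}
    (hG : ∀ r < m, g r ≤ G) (hm : 0 < m) (n : ℕ) :
    g n ^ ((1 : ℝ) / n) ≤ g m ^ (((n / m : ℕ) : ℝ) / n) * G ^ ((1 : ℝ) / n) := by
  have hdiv : g n ≤ g m ^ (n / m) * G := by
    calc g n = g (m * (n / m) + n % m) := by rw [Nat.div_add_mod]
      _ ≤ g m ^ (n / m) * g (n % m) := h.apply_mul_add_le hg _ _ _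
      _ ≤ g m ^ (n / m) * G :=
        mul_le_mul_of_nonneg_left (hG _ (Nat.mod_lt n hm)) (pow_nonneg (hg m) _)
  have hG0 : 0 ≤ G := (hg 0).trans (hG 0 hm)
  calc g n ^ ((1 : ℝ) / n) ≤ (g m ^ (n / m) * G) ^ ((1 : ℝ) / n) :=
        Real.rpow_le_rpow (hg n) hdiv (by positivity)
    _ = g m ^ (((n / m : ℕ) : ℝ) / n) * G ^ ((1 : ℝ) / n) := by
      rw [Real.mul_rpow (pow_nonneg (hg m) _) hG0, ← Real.rpow_natCast,
        ← Real.rpow_mul (hg m), mul_one_div]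

theorem eventually_pow_one_div_lt (h : Submultiplicative g) (hg : ∀ n, 0 ≤ g n) {m : ℕ}
    (hm : 0 < m) {b : ℝ} (hb : g m ^ ((1 : ℝ) / m) < b) :
    ∀ᶠ n : ℕ in atTop, g n ^ ((1 : ℝ) / n) < b := by
  obtain ⟨G, hG⟩ := ((finite_Iio m).image g).bddAbove
  have hbound := h.pow_one_div_le hg (G := max G 1)
    (fun r hr => (hG (mem_image_of_mem g hr)).trans (le_max_left _ _)) hm
  have hlim : Tendsto (fun n : ℕ => g m ^ (((n / m : ℕ) : ℝ) / n) * max G 1 ^ ((1 : ℝ) / n))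
      atTop (𝓝 (g m ^ ((1 : ℝ) / m) * max G 1 ^ (0 : ℝ))) :=
    (tendsto_const_nhds.rpow (tendsto_nat_div_div_atTop hm) (Or.inr (by positivity))).mul
      (tendsto_const_nhds.rpow tendsto_one_div_atTop_nhds_zero_nat
        (Or.inl (by positivity)))
  rw [Real.rpow_zero, mul_one] at hlim
  exact (hlim.eventually_lt_const hb).mono fun n hn => (hbound n).trans_lt hn

theorem exists_tendsto_pow_one_div (h : Submultiplicative g) (hg : ∀ n, 0 ≤ g n) :
    ∃ L, Tendsto (fun n : ℕ => g n ^ ((1 : ℝ) / n)) atTop (𝓝 L) := by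
  have hbdd : BddBelow (range fun m : ℕ => g (m + 1) ^ ((1 : ℝ) / (m + 1 : ℕ))) :=
    ⟨0, forall_mem_range.2 fun m => Real.rpow_nonneg (hg _) _⟩
  refine ⟨⨅ m : ℕ, g (m + 1) ^ ((1 : ℝ) / (m + 1 : ℕ)), tendsto_order.2 ⟨?_, ?_⟩⟩
  · intro b hb
    filter_upwards [eventually_ge_atTop 1] with n hn
    obtain ⟨m, rfl⟩ := Nat.exists_eq_add_of_le' hn
    exact hb.trans_le (ciInf_le hbdd m)
  · intro b hb
    obtain ⟨m, hm⟩ := exists_lt_of_ciInf_lt hb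
    exact h.eventually_pow_one_div_lt hg m.succ_pos hm

end Submultiplicative

theorem tendsto_pow_one_div_of_le_of_le {f g : ℕ → ℝ} {a b L : ℝ} (ha : 0 < a) (hb : 0 < b)
    (hg : ∀ n, 0 ≤ g n) (hlow : ∀ n, a * g n ≤ f n) (hup : ∀ n, f n ≤ b * g n)
    (hlim : Tendsto (fun n : ℕ => g n ^ ((1 : ℝ) / n)) atTop (𝓝 L)) :
    Tendsto (fun n : ℕ => f n ^ ((1 : ℝ) / n)) atTop (𝓝 L) := by
  have hconst : ∀ {c : ℝ}, 0 < c →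
      Tendsto (fun n : ℕ => c ^ ((1 : ℝ) / n) * g n ^ ((1 : ℝ) / n)) atTop (𝓝 L) := by
    intro c hc
    simpa using (tendsto_const_nhds.rpow tendsto_one_div_atTop_nhds_zero_nat
      (Or.inl hc.ne')).mul hlim
  refine tendsto_of_tendsto_of_tendsto_of_le_of_le (hconst ha) (hconst hb) (fun n => ?_)
    (fun n => ?_)
  · rw [← Real.mul_rpow ha.le (hg n)]
    exact Real.rpow_le_rpow (mul_nonneg ha.le (hg n)) (hlow n) (by positivity)
  · rw [← Real.mul_rpow hb.le (hg n)]
    exact Real.rpow_le_rpow ((mul_nonneg ha.le (hg n)).trans (hlow n)) (hup n) (by positivity)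

section Cone

variable {V : Type*} [NormedAddCommGroup V] [NormedSpace ℝ V] {C : Set V}

theorem exists_pos_mul_norm_le_of_pos_on_cone [FiniteDimensional ℝ V] (hC : IsClosed C)
    (hCsmul : ∀ t : ℝ, 0 ≤ t → ∀ a ∈ C, t • a ∈ C) {χ : V →ₗ[ℝ] ℝ}
    (hχ : ∀ v ∈ C, v ≠ 0 → 0 < χ v) :
    ∃ δ > 0, ∀ v ∈ C, δ * ‖v‖ ≤ χ v := by
  have hK : IsCompact (C ∩ sphere 0 1) := (isCompact_sphere 0 1).inter_left hC
  obtain ⟨δ, hδ, hδK⟩ :=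
    hK.exists_forall_le' (LinearMap.continuous_of_finiteDimensional χ).continuousOn fun v hv =>
      hχ v hv.1 (ne_zero_of_mem_unit_sphere ⟨v, hv.2⟩)
  refine ⟨δ, hδ, fun v hv => ?_⟩
  rcases eq_or_ne v 0 with rfl | hv0
  · simp
  have hnorm : 0 < ‖v‖ := norm_pos_iff.2 hv0
  have hunit := hδK (‖v‖⁻¹ • v) ⟨hCsmul _ (inv_nonneg.2 hnorm.le) v hv, by
    simp [norm_smul, hnorm.ne']⟩
  rw [map_smul, smul_eq_mul, le_inv_mul_iff₀ hnorm] at hunit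
  linarith

/-- `2 S w = S (B + w) - S (B - w)` with both terms in the cone, where `δ ‖·‖ ≤ χ`, and their
`χ`-values add up to `2 χ (S B)`. -/
theorem mul_norm_apply_le_of_mapsTo {χ : V →ₗ[ℝ] ℝ} {δ ε : ℝ} {B : V} (hδ : 0 ≤ δ)
    (hχδ : ∀ v ∈ C, δ * ‖v‖ ≤ χ v) (hball : closedBall B ε ⊆ C) {S : V →ₗ[ℝ] V}
    (hS : MapsTo S C C) {w : V} (hw : ‖w‖ ≤ ε) :
    δ * ‖S w‖ ≤ χ (S B) := by
  have hmem : ∀ u, ‖u‖ ≤ ε → B + u ∈ C := fun u hu =>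
    hball (by rwa [mem_closedBall, dist_eq_norm, add_sub_cancel_left])
  have hplus := hχδ _ (hS (hmem w hw))
  have hminus := hχδ _ (hS (hmem (-w) (by rwa [norm_neg])))
  have hsum : χ (S (B + w)) + χ (S (B + -w)) = 2 * χ (S B) := by
    simp only [map_add, map_neg]; ring
  have htri : 2 * ‖S w‖ ≤ ‖S (B + w)‖ + ‖S (B + -w)‖ :=
    calc 2 * ‖S w‖ = ‖S (B + w) - S (B + -w)‖ := by
          rw [map_add, map_add, map_neg, add_sub_add_left_eq_sub, sub_neg_eq_add, ← two_smul ℝ,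
            norm_smul, Real.norm_two]
      _ ≤ _ := norm_sub_le _ _
  nlinarith

theorem mul_opNorm_le_of_mapsTo {χ : V →ₗ[ℝ] ℝ} {δ ε : ℝ} {B : V} (hδ : 0 < δ) (hε : 0 < ε)
    (hχδ : ∀ v ∈ C, δ * ‖v‖ ≤ χ v) (hball : closedBall B ε ⊆ C) {S : V →L[ℝ] V}
    (hS : MapsTo S C C) :
    ε * δ * ‖S‖ ≤ χ (S B) := by
  have hSB : 0 ≤ χ (S B) :=
    (by positivity : 0 ≤ δ * ‖S B‖).trans (hχδ _ (hS (hball (mem_closedBall_self hε.le))))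
  rw [← le_div_iff₀' (by positivity)]
  refine S.opNorm_le_of_unit_norm (by positivity) fun x hx => ?_
  have h := mul_norm_apply_le_of_mapsTo hδ.le hχδ hball (S := S.toLinearMap) hS
    (w := ε • x) (by rw [norm_smul, hx, Real.norm_of_nonneg hε.le, mul_one])
  rw [ContinuousLinearMap.coe_coe, map_smul, norm_smul, Real.norm_of_nonneg hε.le] at h
  rw [le_div_iff₀' (by positivity)]
  linarith

end Cone

theorem stmt_19_general
    (V : Type*) [NormedAddCommGroup V] [NormedSpace ℝ V] [FiniteDimensional ℝ V]
    (C : Set V)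
    (hCclosed : IsClosed C)
    (hCsmul : ∀ t : ℝ, 0 ≤ t → ∀ a ∈ C, t • a ∈ C)
    (T : V →ₗ[ℝ] V) (hT : ∀ a ∈ C, T a ∈ C)
    (B : V) (hB : B ∈ interior C)
    (χ : V →ₗ[ℝ] ℝ) (hχ : ∀ v ∈ C, v ≠ 0 → 0 < χ v) :
    Filter.Tendsto (fun m : ℕ => (χ ((T ^ m) B)) ^ ((1 : ℝ) / m)) Filter.atTop
      (nhds (gelfandRadius T)) := by
  obtain ⟨δ, hδ, hχδ⟩ := exists_pos_mul_norm_le_of_pos_on_cone hCclosed hCsmul hχ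
  obtain ⟨ε, hε, hball⟩ := nhds_basis_closedBall.mem_iff.1 (mem_interior_iff_mem_nhds.1 hB)
  set A := Module.End.toContinuousLinearMap V T
  have hpow (m : ℕ) : LinearMap.toContinuousLinearMap (T ^ m) = A ^ m :=
    map_pow (Module.End.toContinuousLinearMap V) T m
  have hmaps (m : ℕ) : MapsTo (A ^ m) C C := by
    rw [← hpow, LinearMap.coe_toContinuousLinearMap', Module.End.coe_pow]
    exact MapsTo.iterate (fun _ ha => hT _ ha) m
  obtain ⟨L, hL⟩ := (Submultiplicative.norm_pow A).exists_tendsto_pow_one_div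
    fun _ => norm_nonneg _
  have hρ : gelfandRadius T = L := by simpa only [gelfandRadius, hpow] using hL.limsup_eq
  rw [hρ]
  set χ' := LinearMap.toContinuousLinearMap χ
  refine tendsto_pow_one_div_of_le_of_le (mul_pos hε hδ) (by positivity : 0 < ‖χ'‖ * ‖B‖ + 1)
    (fun _ => norm_nonneg _) (fun m => ?_) (fun m => ?_) hL
  · simpa only [← hpow, LinearMap.coe_toContinuousLinearMap'] using
      mul_opNorm_le_of_mapsTo hδ hε hχδ hball (hmaps m)
  · calc χ ((T ^ m) B) = χ' ((A ^ m) B) := by rw [← hpow]; rfl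
      _ ≤ ‖χ'‖ * (‖A ^ m‖ * ‖B‖) :=
        (Real.le_norm_self _).trans (χ'.le_opNorm_of_le ((A ^ m).le_opNorm B))
      _ ≤ (‖χ'‖ * ‖B‖ + 1) * ‖A ^ m‖ := by nlinarith [norm_nonneg χ', norm_nonneg (A ^ m)]

/-- cone Perron–Frobenius, cf. [NZ09, Prop. A.2]: let `V` be a
finite-dimensional real vector space, `C ⊆ V` a closed strictly convex full-dimensional
cone, `T : V → V` linear with `T(C) ⊆ C`, `B` an interior point of `C`, and `χ` a linear
functional strictly positive on `C \ {0}`.  Then the spectral radius of `T` equals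
`lim_{m→∞} χ(Tᵐ B)^{1/m}`. -/
theorem stmt_19
    (V : Type*) [NormedAddCommGroup V] [NormedSpace ℝ V] [FiniteDimensional ℝ V]
    (C : Set V)
    (hCclosed : IsClosed C)
    (hCadd : ∀ a ∈ C, ∀ b ∈ C, a + b ∈ C)
    (hCsmul : ∀ t : ℝ, 0 ≤ t → ∀ a ∈ C, t • a ∈ C)
    (hCsalient : ∀ a, a ∈ C → -a ∈ C → a = 0)       -- C ∩ (-C) = {0}
    (hCspan : Submodule.span ℝ C = ⊤)               -- C spans V
    (T : V →ₗ[ℝ] V) (hT : ∀ a ∈ C, T a ∈ C)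
    (B : V) (hB : B ∈ interior C)
    (χ : V →ₗ[ℝ] ℝ) (hχ : ∀ v ∈ C, v ≠ 0 → 0 < χ v) :
    Filter.Tendsto (fun m : ℕ => (χ ((T ^ m) B)) ^ ((1 : ℝ) / m)) Filter.atTop
      (nhds (gelfandRadius T)) :=
  stmt_19_general V C hCclosed hCsmul T hT B hB χ hχ
end
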